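/- Let S be a dense subsemigroup of a semitopological semigroup (T,+) and e ∈ E(T). Then J_e(S) = {p ∈ e*_S : every A ∈ p is a J-set near e} is a compact subsemigroup of βS (provided it is nonempty). -/

import Mathlib

open Filter Topology Set

attribute [local instance] Ultrafilter.add Ultrafilter.addSemigroup

universe u

section NearIdem

variable {T : Type u} [AddCommSemigroup T] [TopologicalSpace T]

/-- The set of ultrafilters on `S` converging to `e` (denoted `e*_S`). -/
def EStar (S : AddSubsemigroup T) (e : T) : Set (Ultrafilter S) :=
  {p | ∀ U ∈ nhds e, {s : S | (s : T) ∈ U} ∈ p}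

/-- `B ⊆ S` is syndetic near `e`. -/
def SyndeticNear (S : AddSubsemigroup T) (e : T) (B : Set S) : Prop :=
  ∀ U ∈ nhds e, ∃ F : Finset S, (∀ t ∈ F, (t : T) ∈ U) ∧
    ∃ V ∈ nhds e, ∀ s : S, (s : T) ∈ V → ∃ t ∈ F, t + s ∈ B

/-- `A ⊆ S` is topologically piecewise syndetic near `e`. -/
def TopPWSNear (S : AddSubsemigroup T) (e : T) (A : Set S) : Prop :=
  ∀ U ∈ nhds e, ∃ F : Finset S, (∀ t ∈ F, (t : T) ∈ U) ∧
    ∃ V ∈ nhds e, ∀ G : Finset S, ∀ O ∈ nhds e, ∃ x : S, (x : T) ∈ O ∧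
      ∀ g ∈ G, (g : T) ∈ V → ∃ t ∈ F, t + (g + x) ∈ A

/-- Left ideal of a subsemigroup `E` of `βM`. -/
def IsLeftIdealIn {M : Type*} [AddSemigroup M] (E L : Set (Ultrafilter M)) : Prop :=
  L.Nonempty ∧ L ⊆ E ∧ ∀ p ∈ E, ∀ q ∈ L, p + q ∈ L

/-- Minimal left ideal of `E`. -/
def IsMinimalLeftIdealIn {M : Type*} [AddSemigroup M] (E L : Set (Ultrafilter M)) : Prop :=
  IsLeftIdealIn E L ∧ ∀ L', IsLeftIdealIn E L' → L' ⊆ L → L' = L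

/-- The smallest ideal `K(E)`, the union of all minimal left ideals of `E`. -/
def SmallestIdeal {M : Type*} [AddSemigroup M] (E : Set (Ultrafilter M)) : Set (Ultrafilter M) :=
  {p | ∃ L, IsMinimalLeftIdealIn E L ∧ p ∈ L}

/-- `T_p(x) = p`-`lim_(s ∈ S) T_s(x)`. -/
noncomputable def TP {M : Type*} {X : Type*} [TopologicalSpace X]
    (Ts : M → X → X) (p : Ultrafilter M) (x : X) : X :=
  (p.map fun s => Ts s x).lim

/-- `x` is a uniformly recurrent point near `e`. -/
def UnifRecNear (S : AddSubsemigroup T) (e : T) {X : Type*} [TopologicalSpace X]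
    (Ts : S → X → X) (x : X) : Prop :=
  ∀ W ∈ nhds x, SyndeticNear S e {s : S | Ts s x ∈ W}

/-- `x` and `y` are proximal near `e` (characterized via `e*_S`). -/
noncomputable def ProximalNear (S : AddSubsemigroup T) (e : T) {X : Type*} [TopologicalSpace X]
    (Ts : S → X → X) (x y : X) : Prop :=
  ∃ p ∈ EStar S e, TP Ts p x = TP Ts p y

/-- `a + ∑_(t ∈ H) f t`, computed along the increasing enumeration of `H`. -/
def addSum {M : Type*} [Add M] (a : M) (H : Finset ℕ) (f : ℕ → M) : M :=
  ((H.sort (· ≤ ·)).map f).foldl (· + ·) a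

/-- `A ⊆ S` is a `J`-set near `e`. -/
def JSetNear (S : AddSubsemigroup T) (e : T) (A : Set S) : Prop :=
  ∀ F : Finset (ℕ → S), (∀ f ∈ F, Tendsto (fun n => ((f n : S) : T)) atTop (nhds e)) →
    ∀ U ∈ nhds e, ∃ a : S, (a : T) ∈ U ∧ ∃ H : Finset ℕ, H.Nonempty ∧
      ∀ f ∈ F, addSum a H f ∈ A

/-- `J_e(S)`, the ultrafilters in `e*_S` all of whose members are `J`-sets near `e`. -/
def JeSet (S : AddSubsemigroup T) (e : T) : Set (Ultrafilter S) :=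
  {p | p ∈ EStar S e ∧ ∀ A ∈ p, JSetNear S e A}

/-- `𝒯_e`, the sequences in `S` converging to `e`. -/
def SeqToE (S : AddSubsemigroup T) (e : T) : Type _ :=
  {f : ℕ → S // Tendsto (fun n => ((f n : S) : T)) atTop (nhds e)}

/-- `A ⊆ S` is a `C`-set near `e` (combinatorial definition). -/
def CSetNear (S : AddSubsemigroup T) (e : T) (A : Set S) : Prop :=
  ∀ U ∈ nhds e,
    ∃ (α : Finset (SeqToE S e) → S) (H : Finset (SeqToE S e) → Finset ℕ),
      (∀ F, ((α F : S) : T) ∈ U) ∧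
      (∀ F, (H F).Nonempty) ∧
      (∀ F G, F ⊂ G → ∀ a ∈ H F, ∀ b ∈ H G, a < b) ∧
      (∀ (m : ℕ) (G : Fin (m + 1) → Finset (SeqToE S e)),
        (∀ i j, i < j → G i ⊂ G j) →
        ∀ f : Fin (m + 1) → SeqToE S e, (∀ i, f i ∈ G i) →
          (List.ofFn fun i : Fin m =>
              addSum (α (G i.succ)) (H (G i.succ)) (fun t => (f i.succ).1 t)).foldl (· + ·)
            (addSum (α (G 0)) (H (G 0)) (fun t => (f 0).1 t)) ∈ A)

/-!
`e*_S` and the ultrafilters all of whose members are `J`-sets near `e` are both intersections of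
clopen subsets of `βS`, so `J_e(S)` is compact.

For `A ∈ p + q` the set `B = {s | -s + A ∈ q}` lies in `p`. Given sequences `f ∈ F` converging
to `e = e + e` and a neighbourhood `U` of `e`, the `J`-set `B` yields `a` and `H₁` with
`a + ∑_{H₁} f ∈ B` for all `f`, where `a` is chosen so close to `e` that `a + b ∈ U` for all `b`
near `e`. The intersection of the finitely many sets `-(a + ∑_{H₁} f) + A` lies in `q`, so it is
a `J`-set; applied to the tails `f (· + N)` with `H₁ ⊆ [0, N)`, it yields `a'` and `H₂`, and by
commutativity `(a + a') + ∑_{H₁ ∪ (H₂ + N)} f = (a + ∑_{H₁} f) + (a' + ∑_{H₂} f (· + N)) ∈ A`.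
-/

theorem Finset.sort_union_of_forall_lt {α : Type*} [LinearOrder α] {s t : Finset α}
    (h : ∀ x ∈ s, ∀ y ∈ t, x < y) : (s ∪ t).sort = s.sort ++ t.sort := by
  have hnodup : (s.sort ++ t.sort).Nodup :=
    List.nodup_append.2 ⟨s.sort_nodup _, t.sort_nodup _, fun x hx y hy => ne_of_lt <|
      h x ((Finset.mem_sort _).1 hx) y ((Finset.mem_sort _).1 hy)⟩
  have hpair : (s.sort ++ t.sort).Pairwise (· ≤ ·) :=
    List.pairwise_append.2 ⟨s.pairwise_sort _, t.pairwise_sort _, fun x hx y hy => le_of_lt <|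
      h x ((Finset.mem_sort _).1 hx) y ((Finset.mem_sort _).1 hy)⟩
  rw [← (List.toFinset_sort _ hnodup).2 hpair, List.toFinset_append, Finset.sort_toFinset,
    Finset.sort_toFinset]

section addSum

variable {M : Type*}

theorem addSum_add_left [AddSemigroup M] (a b : M) (H : Finset ℕ) (f : ℕ → M) :
    addSum (a + b) H f = a + addSum b H f :=
  List.foldl_assoc

theorem addSum_union_of_forall_lt [Add M] (a : M) {H₁ H₂ : Finset ℕ}
    (h : ∀ x ∈ H₁, ∀ y ∈ H₂, x < y) (f : ℕ → M) :
    addSum a (H₁ ∪ H₂) f = addSum (addSum a H₁ f) H₂ f := by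
  rw [addSum, Finset.sort_union_of_forall_lt h, List.map_append, List.foldl_append]
  rfl

theorem addSum_map_addRightEmbedding [Add M] (a : M) (H : Finset ℕ) (N : ℕ) (f : ℕ → M) :
    addSum a (H.map (addRightEmbedding N)) f = addSum a H (fun n => f (n + N)) := by
  rw [addSum, ← (add_left_strictMono.strictMonoOn (H : Set ℕ)).map_finsetSort, List.map_map]
  rfl

theorem addSum_add_addSum_shift [AddCommSemigroup M] (a a' : M) {H₁ : Finset ℕ} {N : ℕ}
    (hN : H₁ ⊆ Finset.range N) (H₂ : Finset ℕ) (f : ℕ → M) :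
    addSum a H₁ f + addSum a' H₂ (fun n => f (n + N)) =
      addSum (a + a') (H₁ ∪ H₂.map (addRightEmbedding N)) f := by
  have hlt : ∀ x ∈ H₁, ∀ y ∈ H₂.map (addRightEmbedding N), x < y := by
    intro x hx y hy
    obtain ⟨n, -, rfl⟩ := Finset.mem_map.1 hy
    exact (Finset.mem_range.1 (hN hx)).trans_le (Nat.le_add_left N n)
  rw [addSum_union_of_forall_lt _ hlt, addSum_map_addRightEmbedding, add_comm a a',
    addSum_add_left, add_comm a', addSum_add_left]

end addSum

theorem eventually_eventually_add_mem_nhds_of_add_self {X : Type*} [Add X] [TopologicalSpace X]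
    (hl : ∀ t : X, Continuous fun x : X => t + x) (hr : ∀ t : X, Continuous fun x : X => x + t)
    {e : X} (he : e + e = e) {U : Set X} (hU : U ∈ 𝓝 e) :
    ∀ᶠ a in 𝓝 e, ∀ᶠ b in 𝓝 e, a + b ∈ U := by
  have hU' : ∀ᶠ x in 𝓝 (e + e), ∀ᶠ y in 𝓝 x, y ∈ U :=
    eventually_eventually_nhds.2 (by rwa [he])
  filter_upwards [(hr e).continuousAt.eventually hU'] with a ha
  exact (hl a).continuousAt.eventually ha

theorem Ultrafilter.isClosed_setOf_forall_mem {α : Type*} (P : Set α → Prop) :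
    IsClosed {p : Ultrafilter α | ∀ A ∈ p, P A} := by
  simp only [ofPred_forall]
  refine isClosed_iInter fun A => ?_
  by_cases hA : P A
  · simp [hA]
  · simp only [hA, imp_false]
    exact (ultrafilter_isOpen_basic A).isClosed_compl

theorem isClosed_eStar (S : AddSubsemigroup T) (e : T) : IsClosed (EStar S e) := by
  simp only [EStar, ofPred_forall]
  exact isClosed_biInter fun U _ => ultrafilter_isClosed_basic _

theorem isCompact_jeSet (S : AddSubsemigroup T) (e : T) : IsCompact (JeSet S e) :=
  ((isClosed_eStar S e).inter (Ultrafilter.isClosed_setOf_forall_mem _)).isCompact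

section Semitopological

variable {S : AddSubsemigroup T} {e : T}

theorem add_mem_eStar (hl : ∀ t : T, Continuous fun x : T => t + x)
    (hr : ∀ t : T, Continuous fun x : T => x + t) (he : e + e = e) {p q : Ultrafilter S}
    (hp : p ∈ EStar S e) (hq : q ∈ EStar S e) : p + q ∈ EStar S e := by
  intro U hU
  refine (Ultrafilter.eventually_add p q (fun s => (s : T) ∈ U)).2 ?_
  filter_upwards [hp _ (eventually_eventually_add_mem_nhds_of_add_self hl hr he hU)] with s hs
  exact hq _ hs

theorem jSetNear_of_mem_add (hl : ∀ t : T, Continuous fun x : T => t + x)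
    (hr : ∀ t : T, Continuous fun x : T => x + t) (he : e + e = e) {p q : Ultrafilter S}
    (hp : p ∈ JeSet S e) (hq : q ∈ JeSet S e) {A : Set S} (hA : A ∈ p + q) : JSetNear S e A := by
  classical
  intro F hF U hU
  obtain ⟨a, haU, H₁, hH₁, ha⟩ := hp.2 _ ((Ultrafilter.eventually_add p q (· ∈ A)).1 hA) F hF _
    (eventually_eventually_add_mem_nhds_of_add_self hl hr he hU)
  obtain ⟨N, hN⟩ := Finset.exists_nat_subset_range H₁
  have hC : ⋂ f ∈ F, {t | addSum a H₁ f + t ∈ A} ∈ q := (Filter.biInter_finset_mem F).2 ha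
  have hF' : ∀ g ∈ F.image fun f n => f (n + N),
      Tendsto (fun n => ((g n : S) : T)) atTop (𝓝 e) := by
    simp only [Finset.mem_image]
    rintro _ ⟨f, hf, rfl⟩
    exact (hF f hf).comp (tendsto_add_atTop_nat N)
  obtain ⟨a', ha'U, H₂, -, ha'⟩ := hq.2 _ hC _ hF' _ haU
  refine ⟨a + a', ha'U, H₁ ∪ H₂.map (addRightEmbedding N), hH₁.mono Finset.subset_union_left,
    fun f hf => ?_⟩
  rw [← addSum_add_addSum_shift a a' hN]
  exact Set.mem_iInter₂.1 (ha' _ (Finset.mem_image_of_mem _ hf)) f hf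

end Semitopological

variable [T2Space T]

theorem jeSet_compact_subsemigroup_general (S : AddSubsemigroup T)
    (hl : ∀ t : T, Continuous fun x : T => t + x)
    (hr : ∀ t : T, Continuous fun x : T => x + t)
    (e : T) (he : e + e = e) :
    IsCompact (JeSet S e) ∧
      ∀ p ∈ JeSet S e, ∀ q ∈ JeSet S e, p + q ∈ JeSet S e :=
  ⟨isCompact_jeSet S e, fun _ hp _ hq =>
    ⟨add_mem_eStar hl hr he hp.1 hq.1, fun _ hA => jSetNear_of_mem_add hl hr he hp hq hA⟩⟩

/-- `J_e(S)` is a compact subsemigroup of `βS` (provided it is nonempty). -/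
theorem jeSet_compact_subsemigroup (S : AddSubsemigroup T) (hdense : Dense (S : Set T))
    (hl : ∀ t : T, Continuous fun x : T => t + x)
    (hr : ∀ t : T, Continuous fun x : T => x + t)
    (e : T) (he : e + e = e)
    (hne : (JeSet S e).Nonempty) :
    IsCompact (JeSet S e) ∧
      ∀ p ∈ JeSet S e, ∀ q ∈ JeSet S e, p + q ∈ JeSet S e :=
  jeSet_compact_subsemigroup_general S hl hr e he

end NearIdem
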